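/- In a finite two-player zero-sum perfect-information game, if h is a node controlled by player i, then the set of children of h that can be chosen at h by some pure-strategy subgame-perfect equilibrium equals the set of children whose backward-induction value is optimal for player i among all children of h. -/

import Mathlib

set_option linter.unusedVariables false

/-- A finite game tree with `n` players: each internal node is controlled by a
player in `Fin n` and has `k+1` children; leaves carry a payoff vector. -/
inductive GameTree (n : ℕ) : Type
  | leaf (u : Fin n → ℝ) : GameTree n
  | node (p : Fin n) (k : ℕ) (c : Fin (k + 1) → GameTree n) : GameTree n

/-- A pure strategy profile: a choice of child at every internal node. -/
inductive PureProfile {n : ℕ} : GameTree n → Type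
  | leaf {u : Fin n → ℝ} : PureProfile (.leaf u)
  | node {p : Fin n} {k : ℕ} {c : Fin (k + 1) → GameTree n}
      (ch : Fin (k + 1)) (sub : ∀ j, PureProfile (c j)) :
      PureProfile (.node p k c)

/-- The payoff vector induced by a pure strategy profile. -/
def payoff {n : ℕ} : {t : GameTree n} → PureProfile t → Fin n → ℝ
  | .leaf u, .leaf, i => u i
  | .node _ _ _, .node ch sub, i => payoff (sub ch) i

/-- `Dev i g g'` : `g'` is a unilateral deviation of `g` by player `i`
(they agree at every node not controlled by `i`). -/
def Dev {n : ℕ} (i : Fin n) : {t : GameTree n} → PureProfile t → PureProfile t → Prop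
  | .leaf _, _, _ => True
  | .node p _ _, .node ch sub, .node ch' sub' =>
      (p ≠ i → ch' = ch) ∧ ∀ j, Dev i (sub j) (sub' j)

/-- Subgame-perfect equilibrium for pure profiles: at every node, no player can
strictly improve her payoff in the subgame rooted there by a unilateral deviation. -/
def IsSPE {n : ℕ} : {t : GameTree n} → PureProfile t → Prop
  | .leaf _, _ => True
  | .node p k c, .node ch sub =>
      (∀ j, IsSPE (sub j)) ∧
      ∀ (i : Fin n) (g' : PureProfile (.node p k c)),
        Dev i (.node ch sub) g' →
        payoff g' i ≤ payoff (PureProfile.node (p := p) ch sub) i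

/-- The payoffs of leaves of the game tree. -/
def IsLeafPayoff {n : ℕ} : GameTree n → (Fin n → ℝ) → Prop
  | .leaf u, v => u = v
  | .node _ _ c, v => ∃ j, IsLeafPayoff (c j) v

/-- Zero-sum condition for two-player games: at every leaf the two payoffs sum to zero. -/
def ZeroSum (t : GameTree 2) : Prop :=
  ∀ v, IsLeafPayoff t v → v 0 + v 1 = 0

/-- Backward-induction (minimax) value of a two-player zero-sum tree,
measured as the payoff to player `0` (the maximizer); player `1` minimizes. -/
noncomputable def biValue : GameTree 2 → ℝ
  | .leaf u => u 0
  | .node p _ c =>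
      if p = 0 then Finset.univ.sup' Finset.univ_nonempty fun j => biValue (c j)
      else Finset.univ.inf' Finset.univ_nonempty fun j => biValue (c j)

/-- Addresses of nodes in a game tree. -/
inductive Addr {n : ℕ} : GameTree n → Type
  | nil {t : GameTree n} : Addr t
  | cons {p : Fin n} {k : ℕ} {c : Fin (k + 1) → GameTree n}
      (j : Fin (k + 1)) (a : Addr (c j)) : Addr (.node p k c)

/-- The subtree rooted at a given address. -/
def subtreeAt {n : ℕ} : {t : GameTree n} → Addr t → GameTree n
  | t, .nil => t
  | .node _ _ _, .cons j a => subtreeAt (t := _) a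

/-- The child index (as a natural number) chosen by a pure profile at the node
sitting at a given address (`none` if the address points to a leaf). -/
def choiceAt {n : ℕ} : {t : GameTree n} → PureProfile t → Addr t → Option ℕ
  | .leaf _, _, .nil => none
  | .node _ _ _, .node ch _, .nil => some ch.val
  | .node _ _ _, .node _ sub, .cons j a => choiceAt (sub j) a

/-!
By induction, an SPE of a zero-sum game pays player `0` the backward-induction value in every
subgame: switching the root choice to a child `j` would give the mover the value of `j`, so the
chosen child must be optimal for the mover. Conversely, an optimal choice on top of SPEs of the
children is an SPE: a deviation earns the deviator at most their value in the child where play goes,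
so the mover gains at most the optimum and the opponent, who cannot change the choice, gains nothing.
Grafting such a profile at the given address into an SPE of the whole tree gives the equilibrium.
-/

namespace GameTree

noncomputable def playerValue (i : Fin 2) (t : GameTree 2) : ℝ :=
  if i = 0 then biValue t else -biValue t

theorem playerValue_inj {i : Fin 2} {s t : GameTree 2} :
    playerValue i s = playerValue i t ↔ biValue s = biValue t := by
  unfold playerValue
  split_ifs <;> simp

theorem playerValue_child_le (p : Fin 2) {k : ℕ} (c : Fin (k + 1) → GameTree 2)
    (j : Fin (k + 1)) : playerValue p (c j) ≤ playerValue p (.node p k c) := by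
  obtain rfl | rfl : p = 0 ∨ p = 1 := by omega
  · simp only [playerValue, biValue]
    exact Finset.le_sup' (fun j => biValue (c j)) (Finset.mem_univ j)
  · simp only [playerValue, biValue, if_neg (by decide : (1 : Fin 2) ≠ 0), neg_le_neg_iff]
    exact Finset.inf'_le (fun j => biValue (c j)) (Finset.mem_univ j)

theorem exists_biValue_child_eq (p : Fin 2) (k : ℕ) (c : Fin (k + 1) → GameTree 2) :
    ∃ j, biValue (c j) = biValue (.node p k c) := by
  rw [biValue]
  split_ifs
  · obtain ⟨j, -, hj⟩ := Finset.exists_mem_eq_sup' Finset.univ_nonempty fun j => biValue (c j)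
    exact ⟨j, hj.symm⟩
  · obtain ⟨j, -, hj⟩ := Finset.exists_mem_eq_inf' Finset.univ_nonempty fun j => biValue (c j)
    exact ⟨j, hj.symm⟩

theorem biValue_child_eq_iff {p : Fin 2} {k : ℕ} {c : Fin (k + 1) → GameTree 2}
    {j : Fin (k + 1)} :
    biValue (c j) = biValue (.node p k c) ↔ ∀ j', playerValue p (c j') ≤ playerValue p (c j) := by
  constructor
  · intro h j'
    exact (playerValue_child_le p c j').trans (playerValue_inj.2 h).ge
  · intro h
    obtain ⟨j₀, hj₀⟩ := exists_biValue_child_eq p k c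
    rw [← playerValue_inj (i := p)]
    refine le_antisymm (playerValue_child_le p c j) ?_
    exact (playerValue_inj.2 hj₀).ge.trans (h j₀)

end GameTree

open GameTree

theorem Dev.refl {n : ℕ} (i : Fin n) {t : GameTree n} (g : PureProfile t) : Dev i g g := by
  induction g with
  | leaf => trivial
  | node ch sub ih => exact ⟨fun _ => rfl, ih⟩

theorem isLeafPayoff_payoff {n : ℕ} {t : GameTree n} (g : PureProfile t) :
    IsLeafPayoff t (payoff g) := by
  induction g with
  | leaf => rfl
  | node ch sub ih => exact ⟨ch, ih ch⟩

theorem ZeroSum.child {p : Fin 2} {k : ℕ} {c : Fin (k + 1) → GameTree 2}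
    (hz : ZeroSum (.node p k c)) (j : Fin (k + 1)) : ZeroSum (c j) :=
  fun v hv => hz v ⟨j, hv⟩

theorem ZeroSum.payoff_eq_playerValue {t : GameTree 2} (hz : ZeroSum t) {g : PureProfile t}
    (h : payoff g 0 = biValue t) (i : Fin 2) : payoff g i = playerValue i t := by
  have hsum := hz _ (isLeafPayoff_payoff g)
  obtain rfl | rfl : i = 0 ∨ i = 1 := by omega
  · exact h
  · rw [playerValue, if_neg (by decide), ← h]
    linarith

theorem IsSPE.payoff_le_of_dev {n : ℕ} {t : GameTree n} {g g' : PureProfile t} (hg : IsSPE g)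
    {i : Fin n} (hd : Dev i g g') : payoff g' i ≤ payoff g i := by
  cases g with
  | leaf => cases g'; rfl
  | node ch sub => exact hg.2 i g' hd

theorem IsSPE.payoff_zero_eq_biValue : ∀ {t : GameTree 2}, ZeroSum t →
    ∀ {g : PureProfile t}, IsSPE g → payoff g 0 = biValue t
  | .leaf _, _, .leaf, _ => rfl
  | .node p k c, hz, .node ch sub, hg => by
    have hsub j : payoff (sub j) 0 = biValue (c j) :=
      payoff_zero_eq_biValue (hz.child j) (hg.1 j)
    refine (hsub ch).trans (biValue_child_eq_iff.2 fun j => ?_)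
    have hdev : Dev p (.node ch sub) (.node (p := p) j sub) :=
      ⟨fun h => (h rfl).elim, fun i => Dev.refl p (sub i)⟩
    have := hg.2 p _ hdev
    rwa [payoff, payoff, (hz.child j).payoff_eq_playerValue (hsub j),
      (hz.child ch).payoff_eq_playerValue (hsub ch)] at this

theorem IsSPE.payoff_eq_playerValue {t : GameTree 2} (hz : ZeroSum t) {g : PureProfile t}
    (hg : IsSPE g) (i : Fin 2) : payoff g i = playerValue i t :=
  hz.payoff_eq_playerValue (hg.payoff_zero_eq_biValue hz) i

theorem IsSPE.payoff_le_playerValue_of_dev {t : GameTree 2} (hz : ZeroSum t)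
    {g g' : PureProfile t} (hg : IsSPE g) {i : Fin 2} (hd : Dev i g g') :
    payoff g' i ≤ playerValue i t :=
  (hg.payoff_le_of_dev hd).trans (hg.payoff_eq_playerValue hz i).le

theorem isSPE_node_iff {p : Fin 2} {k : ℕ} {c : Fin (k + 1) → GameTree 2}
    (hz : ZeroSum (.node p k c)) {ch : Fin (k + 1)} {sub : ∀ j, PureProfile (c j)} :
    IsSPE (PureProfile.node (p := p) ch sub) ↔
      (∀ j, IsSPE (sub j)) ∧ biValue (c ch) = biValue (.node p k c) := by
  constructor
  · intro hg
    refine ⟨hg.1, ?_⟩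
    rw [← (hg.1 ch).payoff_zero_eq_biValue (hz.child ch), ← hg.payoff_zero_eq_biValue hz]
    rfl
  · rintro ⟨hsub, hopt⟩
    refine ⟨hsub, fun i g' hd => ?_⟩
    cases g' with | node ch' sub' =>
    obtain ⟨hch, hd⟩ := hd
    calc payoff (sub' ch') i
        ≤ playerValue i (c ch') := (hsub ch').payoff_le_playerValue_of_dev (hz.child ch') (hd ch')
      _ ≤ playerValue i (c ch) := ?_
      _ = payoff (sub ch) i := ((hsub ch).payoff_eq_playerValue (hz.child ch) i).symm
    by_cases hi : p = i
    · subst hi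
      exact (playerValue_child_le p c ch').trans (playerValue_inj.2 hopt).ge
    · rw [hch hi]

theorem exists_isSPE : ∀ {t : GameTree 2}, ZeroSum t → ∃ g : PureProfile t, IsSPE g
  | .leaf _, _ => ⟨.leaf, trivial⟩
  | .node p k c, hz => by
    choose sub hsub using fun j => exists_isSPE (hz.child j)
    obtain ⟨ch, hch⟩ := exists_biValue_child_eq p k c
    exact ⟨.node ch sub, (isSPE_node_iff hz).2 ⟨hsub, hch⟩⟩

theorem IsSPE.update_child {p : Fin 2} {k : ℕ} {c : Fin (k + 1) → GameTree 2}
    (hz : ZeroSum (.node p k c)) {ch : Fin (k + 1)} {sub : ∀ j, PureProfile (c j)}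
    (hg : IsSPE (PureProfile.node (p := p) ch sub)) {j : Fin (k + 1)} {gj : PureProfile (c j)}
    (hgj : IsSPE gj) : IsSPE (PureProfile.node (p := p) ch (Function.update sub j gj)) := by
  rw [isSPE_node_iff hz] at hg ⊢
  refine ⟨fun i => ?_, hg.2⟩
  by_cases hij : i = j
  · subst hij
    simpa using hgj
  · simpa [Function.update_of_ne hij] using hg.1 i

theorem exists_isSPE_choiceAt_iff {t : GameTree 2} (hz : ZeroSum t) (ad : Addr t)
    {p : Fin 2} {k : ℕ} {c : Fin (k + 1) → GameTree 2} (hsub : subtreeAt ad = .node p k c)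
    (a : Fin (k + 1)) :
    (∃ g : PureProfile t, IsSPE g ∧ choiceAt g ad = some a.val) ↔
      biValue (c a) = biValue (.node p k c) := by
  induction ad with
  | @nil t =>
    cases t with
    | leaf => cases hsub
    | node =>
      cases hsub
      constructor
      · rintro ⟨g, hg, hch⟩
        cases g with | node ch sub =>
        obtain rfl : ch = a := Fin.ext (Option.some_injective _ hch)
        exact ((isSPE_node_iff hz).1 hg).2
      · intro hopt
        choose sub hspe using fun j => exists_isSPE (hz.child j)
        exact ⟨.node a sub, (isSPE_node_iff hz).2 ⟨hspe, hopt⟩, rfl⟩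
  | @cons q m d j rest ih =>
    rw [← ih (hz.child j) hsub]
    constructor
    · rintro ⟨g, hg, hch⟩
      cases g with | node ch sub =>
      exact ⟨sub j, hg.1 j, hch⟩
    · rintro ⟨gj, hgj, hch⟩
      obtain ⟨g, hg⟩ := exists_isSPE hz
      cases g with | node ch sub =>
      refine ⟨.node ch (Function.update sub j gj), hg.update_child hz hgj, ?_⟩
      simpa [choiceAt] using hch

theorem stmt13 (t : GameTree 2) (hz : ZeroSum t)
    (ad : Addr t) (p : Fin 2) (k : ℕ) (c : Fin (k + 1) → GameTree 2)
    (hsub : subtreeAt ad = .node p k c) (a : Fin (k + 1)) :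
    (∃ g : PureProfile t, IsSPE g ∧ choiceAt g ad = some a.val) ↔
      biValue (c a) =
        (if p = 0 then Finset.univ.sup' Finset.univ_nonempty fun j => biValue (c j)
         else Finset.univ.inf' Finset.univ_nonempty fun j => biValue (c j)) := by
  rw [exists_isSPE_choiceAt_iff hz ad hsub a, biValue]
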